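/- arXiv:1110.3113 — 2 statements merged into one kernel-verified Lean document; each statement's English description precedes it below -/
import Mathlib

section
/- For every prime p, Glaisher's congruence holds: p·B_{p-1} ≡ p + (p-1)! (mod p²), i.e., p² divides the numerator of the rational number p·B_{p-1} − p − (p-1)! in lowest terms; equivalently, w_p ≡ B_{p-1} + 1/p − 1 (mod p). -/
/-!
Faulhaber's formula for `∑_{k<p} k^(p-1)` gives
`p B_{p-1} = ∑_{k<p} k^(p-1) - ∑_{i<p-1} B_i C(p,i) p^(p-1-i)`.
By von Staudt–Clausen `p B_i` is `p`-integral and `p ∣ C(p,i)` for `0 < i < p`, so for `p ≥ 5`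
every term of the second sum is divisible by `p²` (the term `i = p - 2` vanishes as `p - 2` is
odd). What remains is Lerch's congruence `∑_{k<p} k^(p-1) ≡ (p-1)! + p (mod p²)`: modulo `p²`
a product of factors `≡ 1 (mod p)` is `1 + ∑ (factor - 1)`, and applying this to both sides of
`∏_{0<k<p} k^(p-1) = (-(p-1)!)^(p-1)` (Fermat on the left, Wilson on the right) gives
`∑ (k^(p-1) - 1) ≡ (p-1)(-(p-1)! - 1) ≡ (p-1)! + 1 (mod p²)`.
-/

open Finset Nat

theorem sq_dvd_prod_sub_one_sub_sum {ι R : Type*} [CommRing R] {d : R} {s : Finset ι}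
    {a : ι → R} (h : ∀ i ∈ s, d ∣ a i - 1) :
    d ^ 2 ∣ ∏ i ∈ s, a i - 1 - ∑ i ∈ s, (a i - 1) := by
  classical
  induction s using Finset.induction_on with
  | empty => simp
  | @insert x s hx ih =>
    rw [prod_insert hx, sum_insert hx]
    have ih := ih fun i hi => h i (mem_insert_of_mem hi)
    have hprod : d ∣ ∏ i ∈ s, a i - 1 := by
      rw [← sub_add_cancel (∏ i ∈ s, a i - 1) (∑ i ∈ s, (a i - 1))]
      exact dvd_add ((dvd_pow_self d two_ne_zero).trans ih)
        (dvd_sum fun i hi => h i (mem_insert_of_mem hi))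
    have key : a x * ∏ i ∈ s, a i - 1 - (a x - 1 + ∑ i ∈ s, (a i - 1)) =
        (a x - 1) * (∏ i ∈ s, a i - 1) + (∏ i ∈ s, a i - 1 - ∑ i ∈ s, (a i - 1)) := by
      ring
    rw [sq] at ih
    rw [key, sq]
    exact dvd_add (mul_dvd_mul (h x (mem_insert_self x s)) hprod) ih

theorem sum_range_pow_pred_modEq_factorial_add {p : ℕ} (hp : p.Prime) (hp2 : p ≠ 2) :
    ∑ k ∈ range p, (k : ℤ) ^ (p - 1) ≡ (p - 1)! + p [ZMOD p ^ 2] := by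
  have := Fact.mk hp
  have hpred : p - 1 + 1 = p := Nat.sub_add_cancel hp.one_le
  have fermat : ∀ k ∈ Ico 1 p, (p : ℤ) ∣ (k : ℤ) ^ (p - 1) - 1 := by
    intro k hk
    have hk := mem_Ico.mp hk
    refine (Int.ModEq.pow_card_sub_one_eq_one hp ?_).symm.dvd
    rw [Int.isCoprime_iff_gcd_eq_one, Int.gcd_natCast_natCast]
    exact Nat.Coprime.symm ((hp.coprime_iff_not_dvd).2 (Nat.not_dvd_of_pos_of_lt hk.1 hk.2))
  have wilson : (p : ℤ) ∣ -((p - 1)! : ℤ) - 1 := by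
    rw [← ZMod.intCast_zmod_eq_zero_iff_dvd]
    push_cast
    rw [ZMod.wilsons_lemma]
    ring
  have hfactorial : ∏ k ∈ Ico 1 p, (k : ℤ) ^ (p - 1) = (-((p - 1)! : ℤ)) ^ (p - 1) := by
    rw [(hp.even_sub_one hp2).neg_pow, prod_pow, ← prod_Ico_id_eq_factorial, hpred]
    push_cast
    rfl
  have hsplit : ∑ k ∈ range p, (k : ℤ) ^ (p - 1) =
      ∑ k ∈ Ico 1 p, ((k : ℤ) ^ (p - 1) - 1) + (p - 1) := by
    rw [range_eq_Ico, sum_eq_sum_Ico_succ_bot hp.pos, sum_sub_distrib, sum_const, card_Ico,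
      nsmul_one, Nat.cast_sub hp.one_le]
    push_cast [zero_pow (Nat.sub_ne_zero_of_lt hp.one_lt)]
    ring
  obtain ⟨c, hc⟩ := sq_dvd_prod_sub_one_sub_sum fermat
  obtain ⟨c', hc'⟩ := sq_dvd_prod_sub_one_sub_sum (s := range (p - 1)) fun _ _ => wilson
  obtain ⟨w, hw⟩ := wilson
  rw [prod_const, sum_const, card_range, nsmul_eq_mul] at hc'
  rw [Int.modEq_iff_dvd, hsplit]
  refine ⟨c - c' - w, ?_⟩
  rw [hfactorial] at hc
  push_cast [hp.one_le] at hc'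
  linear_combination hc - hc' - p * hw

section padicNorm

variable {p : ℕ} [hp : Fact p.Prime]

theorem padicNorm_natCast_pow_self (n : ℕ) :
    padicNorm p ((p : ℚ) ^ n) = (p : ℚ) ^ (-n : ℤ) := by
  rw [IsAbsoluteValue.abv_pow (padicNorm p), padicNorm.padicNorm_p_of_prime, zpow_neg,
    zpow_natCast, inv_pow]

theorem padicNorm_one_div_prime_le {q : ℕ} (hq : q.Prime) : padicNorm p (1 / q) ≤ p := by
  have := Fact.mk hq
  rw [padicNorm.div, padicNorm.one]
  rcases eq_or_ne p q with rfl | hpq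
  · rw [padicNorm.padicNorm_p_of_prime, one_div, inv_inv]
  · rw [padicNorm.padicNorm_of_prime_of_ne hpq, div_one]
    exact_mod_cast hp.out.one_le

theorem padicNorm_bernoulli_le (m : ℕ) : padicNorm p (bernoulli m) ≤ p := by
  obtain ⟨k, rfl | rfl⟩ := m.even_or_odd'
  · obtain ⟨n, hn⟩ := Bernoulli.vonStaudt_clausen k
    rw [eq_sub_of_add_eq hn.symm]
    refine padicNorm.sub.trans (max_le ((padicNorm.of_int n).trans ?_) ?_)
    · exact_mod_cast hp.out.one_le
    · exact padicNorm.sum_le' (fun q hq => padicNorm_one_div_prime_le (mem_filter.1 hq).2.1)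
        (Nat.cast_nonneg p)
  · rcases eq_or_ne k 0 with rfl | hk
    · rw [mul_zero, zero_add, bernoulli_one, neg_div, padicNorm.neg]
      exact_mod_cast padicNorm_one_div_prime_le Nat.prime_two
    · rw [bernoulli_eq_zero_of_odd (odd_two_mul_add_one k) (by omega), padicNorm.zero]
      exact Nat.cast_nonneg p

theorem padicNorm_bernoulli_mul_choose_le_one {i : ℕ} (hi : i < p) :
    padicNorm p (bernoulli i * p.choose i) ≤ 1 := by
  rcases eq_or_ne i 0 with rfl | hi0
  · simp
  obtain ⟨c, hc⟩ := hp.out.dvd_choose_self hi0 hi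
  have hp0 : (0 : ℚ) < p := by exact_mod_cast hp.out.pos
  rw [hc, Nat.cast_mul, padicNorm.mul, padicNorm.mul, padicNorm.padicNorm_p_of_prime]
  calc padicNorm p (bernoulli i) * ((p : ℚ)⁻¹ * padicNorm p c)
      ≤ p * ((p : ℚ)⁻¹ * 1) := by
        gcongr
        · exact mul_nonneg (inv_nonneg.2 hp0.le) (padicNorm.nonneg _)
        · exact padicNorm_bernoulli_le i
        · exact padicNorm.of_nat c
    _ = 1 := by field_simp

theorem padicNorm_bernoulli_mul_choose_mul_pow_le (hp5 : 5 ≤ p) {i : ℕ} (hi : i < p - 1) :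
    padicNorm p (bernoulli i * p.choose i * (p : ℚ) ^ (p - 1 - i)) ≤
      (p : ℚ) ^ (-2 : ℤ) := by
  rcases eq_or_ne i (p - 2) with rfl | hi2
  · obtain ⟨t, ht⟩ := hp.out.odd_of_ne_two (by omega)
    rw [bernoulli_eq_zero_of_odd ⟨t - 1, by omega⟩ (by omega), zero_mul, zero_mul,
      padicNorm.zero]
    positivity
  rw [padicNorm.mul, padicNorm_natCast_pow_self]
  calc padicNorm p (bernoulli i * p.choose i) * (p : ℚ) ^ (-(p - 1 - i : ℕ) : ℤ)
      ≤ 1 * (p : ℚ) ^ (-2 : ℤ) := by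
        gcongr
        · exact padicNorm_bernoulli_mul_choose_le_one (by omega)
        · exact_mod_cast hp.out.one_le
        · omega
    _ = (p : ℚ) ^ (-2 : ℤ) := one_mul _

theorem pow_dvd_num_of_padicNorm_le {x : ℚ} {n : ℕ}
    (h : padicNorm p x ≤ (p : ℚ) ^ (-n : ℤ)) :
    (p : ℤ) ^ n ∣ x.num := by
  have hnum : padicNorm p x.num ≤ padicNorm p x := by
    rw [← Rat.mul_den_eq_num, padicNorm.mul]
    exact mul_le_of_le_one_right (padicNorm.nonneg x) (padicNorm.of_nat x.den)
  exact_mod_cast padicNorm.dvd_iff_norm_le.mpr (hnum.trans h)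

end padicNorm

theorem sum_range_pow_pred_eq_mul_bernoulli_add {n : ℕ} (hn : n ≠ 0) :
    ∑ k ∈ range n, (k : ℚ) ^ (n - 1) =
      n * bernoulli (n - 1) +
        ∑ i ∈ range (n - 1), bernoulli i * n.choose i * (n : ℚ) ^ (n - 1 - i) := by
  obtain ⟨m, rfl⟩ : ∃ m, n = m + 1 := ⟨n - 1, by omega⟩
  rw [sum_range_pow, sum_range_succ, add_comm, Nat.add_sub_cancel]
  congr 1
  · rw [Nat.choose_succ_self_right, Nat.add_sub_cancel_left, pow_one]
    push_cast
    field_simp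
  · refine sum_congr rfl fun i hi => ?_
    have hi := mem_range.1 hi
    rw [show m + 1 - i = (m - i) + 1 by omega, pow_succ]
    push_cast
    field_simp

theorem glaisher_congruence (p : ℕ) (hp : p.Prime) :
    ((p : ℤ) ^ 2) ∣
      ((p : ℚ) * bernoulli (p - 1) - p - ((p - 1).factorial : ℚ)).num := by
  have := Fact.mk hp
  obtain rfl | rfl | hp5 : p = 2 ∨ p = 3 ∨ 5 ≤ p := by
    have : p ≠ 4 := by rintro rfl; norm_num at hp
    have := hp.two_le
    omega
  · norm_num [bernoulli_one]
  · norm_num [bernoulli_two]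
  have hlerch := (sum_range_pow_pred_modEq_factorial_add hp (by omega)).symm.dvd
  have hfaulhaber : (p : ℚ) * bernoulli (p - 1) - p - ((p - 1)! : ℚ) =
      ((∑ k ∈ range p, (k : ℤ) ^ (p - 1) - ((p - 1)! + p) : ℤ) : ℚ) -
        ∑ i ∈ range (p - 1), bernoulli i * p.choose i * (p : ℚ) ^ (p - 1 - i) := by
    push_cast
    rw [sum_range_pow_pred_eq_mul_bernoulli_add hp.ne_zero]
    ring
  apply pow_dvd_num_of_padicNorm_le
  rw [hfaulhaber]
  refine padicNorm.sub.trans (max_le ?_ ?_)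
  · exact padicNorm.dvd_iff_norm_le.mp (by exact_mod_cast hlerch)
  · exact padicNorm.sum_le'
      (fun i hi => padicNorm_bernoulli_mul_choose_mul_pow_le hp5 (mem_range.1 hi)) (by positivity)
end

section
/- The greatest common divisor of all Fermat-Wilson quotients g_p, taken over all non-Wilson primes p, equals 24. In particular, no Fermat-Wilson quotient is a prime number. -/
/-!
By Wilson's theorem `w_p` is an integer, and it is coprime to every prime `q ≤ p`: for `q < p`
because `q ∣ (p - 1)!`, for `q = p` because `p` is not a Wilson prime. Fermat's little theorem
then gives `p ∣ w_p ^ (p - 1) - 1`, and for `p > 3`, since `w_p` is prime to `6`,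
`24 ∣ w_p ^ 2 - 1 ∣ w_p ^ (p - 1) - 1`; as `p` is prime to `24`, `24 ∣ g_p`. Also `g_2 = g_3 = 0`.
Conversely `gcd(g_7, g_11) = 24`, and no prime is a multiple of `24`.
-/

/-- The Fermat-Wilson quotient `g_p = (w_p^(p-1) - 1)/p` where `w_p = ((p-1)!+1)/p`. -/
def fermatWilsonQuotient (p : ℕ) : ℤ :=
  (((((p - 1).factorial : ℤ) + 1) / p) ^ (p - 1) - 1) / p

open scoped Nat

def wilsonQuotient (p : ℕ) : ℤ := (((p - 1)! : ℤ) + 1) / p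

lemma fermatWilsonQuotient_eq (p : ℕ) :
    fermatWilsonQuotient p = (wilsonQuotient p ^ (p - 1) - 1) / p := rfl

lemma Nat.Prime.intCast_dvd_factorial_sub_one_add_one {p : ℕ} (hp : p.Prime) :
    (p : ℤ) ∣ (p - 1)! + 1 := by
  have := Fact.mk hp
  rw [← ZMod.intCast_zmod_eq_zero_iff_dvd]
  push_cast
  rw [ZMod.wilsons_lemma, neg_add_cancel]

lemma mul_wilsonQuotient {p : ℕ} (hp : p.Prime) : p * wilsonQuotient p = (p - 1)! + 1 :=
  Int.mul_ediv_cancel' hp.intCast_dvd_factorial_sub_one_add_one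

lemma wilsonQuotient_dvd {p : ℕ} (hp : p.Prime) : wilsonQuotient p ∣ (p - 1)! + 1 :=
  Dvd.intro_left _ (mul_wilsonQuotient hp)

lemma isCoprime_wilsonQuotient {p q : ℕ} (hp : p.Prime) (hq : q.Prime) (hqp : q ≤ p)
    (hnw : ¬ p ^ 2 ∣ (p - 1)! + 1) : IsCoprime (wilsonQuotient p) q := by
  refine ((Nat.prime_iff_prime_int.mp hq).coprime_iff_not_dvd.mpr fun hdvd => ?_).symm
  rcases hqp.lt_or_eq with hlt | rfl
  · have hfac : (q : ℤ) ∣ (p - 1)! :=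
      Int.natCast_dvd_natCast.mpr (hq.dvd_factorial.mpr (by omega))
    have hone : (q : ℤ) ∣ 1 := (dvd_add_right hfac).mp (hdvd.trans (wilsonQuotient_dvd hp))
    exact hq.not_dvd_one (by exact_mod_cast hone)
  · obtain ⟨c, hc⟩ := hdvd
    refine hnw (Int.natCast_dvd_natCast.mp ⟨c, ?_⟩)
    push_cast
    rw [← mul_wilsonQuotient hp, hc]
    ring

lemma Int.twentyFour_dvd_sq_sub_one {w : ℤ} (h2 : IsCoprime w 2) (h3 : IsCoprime w 3) :
    24 ∣ w ^ 2 - 1 := by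
  have hdvd8 : 8 ∣ w ^ 2 - 1 := Int.eight_dvd_sq_sub_one_of_odd (Int.isCoprime_two_right.mp h2)
  have hdvd3 : 3 ∣ w ^ 2 - 1 := (Int.ModEq.pow_card_sub_one_eq_one Nat.prime_three h3).symm.dvd
  have hcop : IsCoprime (8 : ℤ) 3 := by norm_num [Int.isCoprime_iff_gcd_eq_one]
  simpa using hcop.mul_dvd hdvd8 hdvd3

lemma Int.twentyFour_dvd_pow_sub_one {w : ℤ} {n : ℕ} (h2 : IsCoprime w 2) (h3 : IsCoprime w 3)
    (hn : Even n) : 24 ∣ w ^ n - 1 := by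
  obtain ⟨m, rfl⟩ := hn
  rw [← two_mul, pow_mul]
  exact (Int.twentyFour_dvd_sq_sub_one h2 h3).trans (sub_one_dvd_pow_sub_one _ m)

lemma twentyFour_mul_dvd_wilsonQuotient_pow_sub_one {p : ℕ} (hp : p.Prime) (h3p : 3 < p)
    (hnw : ¬ p ^ 2 ∣ (p - 1)! + 1) : 24 * (p : ℤ) ∣ wilsonQuotient p ^ (p - 1) - 1 := by
  have h24 : 24 ∣ wilsonQuotient p ^ (p - 1) - 1 :=
    Int.twentyFour_dvd_pow_sub_one
      (by exact_mod_cast isCoprime_wilsonQuotient hp Nat.prime_two (by omega) hnw)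
      (by exact_mod_cast isCoprime_wilsonQuotient hp Nat.prime_three (by omega) hnw)
      (hp.even_sub_one (by omega))
  have hfermat : (p : ℤ) ∣ wilsonQuotient p ^ (p - 1) - 1 :=
    (Int.ModEq.pow_card_sub_one_eq_one hp (isCoprime_wilsonQuotient hp hp le_rfl hnw)).symm.dvd
  have hcop : IsCoprime (24 : ℤ) p := by
    have h2 : IsCoprime (2 : ℤ) p :=
      Nat.isCoprime_iff_coprime.mpr ((Nat.coprime_primes Nat.prime_two hp).mpr (by omega))
    have h3 : IsCoprime (3 : ℤ) p :=
      Nat.isCoprime_iff_coprime.mpr ((Nat.coprime_primes Nat.prime_three hp).mpr (by omega))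
    simpa using (h2.pow_left (m := 3)).mul_left h3
  exact hcop.mul_dvd h24 hfermat

lemma twentyFour_dvd_fermatWilsonQuotient {p : ℕ} (hp : p.Prime) (hnw : ¬ p ^ 2 ∣ (p - 1)! + 1) :
    24 ∣ fermatWilsonQuotient p := by
  rcases le_or_gt p 3 with hp3 | hp3
  · interval_cases p <;> norm_num at hp <;> decide
  · rw [fermatWilsonQuotient_eq]
    exact Int.dvd_div_of_mul_dvd
      ((mul_comm _ _).dvd.trans (twentyFour_mul_dvd_wilsonQuotient_pow_sub_one hp hp3 hnw))

lemma fermatWilsonQuotient_seven : fermatWilsonQuotient 7 = 170578899504 := by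
  norm_num [fermatWilsonQuotient, Nat.factorial]

lemma fermatWilsonQuotient_eleven : fermatWilsonQuotient 11 =
    1387752405580695978098914368989316131852701063520729400 := by
  norm_num [fermatWilsonQuotient, Nat.factorial]

lemma not_irreducible_of_mul_dvd {α : Type*} [CommMonoid α] {a b q : α} (ha : ¬ IsUnit a)
    (hb : ¬ IsUnit b) (h : a * b ∣ q) : ¬ Irreducible q := by
  rintro hq
  obtain ⟨c, rfl⟩ := h
  rcases hq.isUnit_or_isUnit (mul_assoc a b c) with hu | hu
  · exact ha hu
  · exact hb (isUnit_of_mul_isUnit_left hu)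

theorem gcd_fermat_wilson_quotients :
    (∀ p : ℕ, p.Prime → ¬ p ^ 2 ∣ (p - 1).factorial + 1 →
        (24 : ℤ) ∣ fermatWilsonQuotient p) ∧
    (∀ d : ℤ, (∀ p : ℕ, p.Prime → ¬ p ^ 2 ∣ (p - 1).factorial + 1 →
        d ∣ fermatWilsonQuotient p) → d ∣ 24) ∧
    (∀ p : ℕ, p.Prime → ¬ p ^ 2 ∣ (p - 1).factorial + 1 →
        ¬ Prime (fermatWilsonQuotient p)) := by
  refine ⟨fun p => twentyFour_dvd_fermatWilsonQuotient, fun d hd => ?_, fun p hp hnw => ?_⟩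
  · have h7 := hd 7 (by norm_num) (by decide)
    have h11 := hd 11 (by norm_num) (by decide)
    rw [fermatWilsonQuotient_seven] at h7
    rw [fermatWilsonQuotient_eleven] at h11
    have hgcd : Int.gcd 170578899504
        1387752405580695978098914368989316131852701063520729400 = 24 := by norm_num
    simpa [hgcd] using Int.dvd_coe_gcd h7 h11
  · exact fun hprime => not_irreducible_of_mul_dvd (a := 2) (b := 12) (by decide) (by decide)
      (twentyFour_dvd_fermatWilsonQuotient hp hnw) hprime.irreducible
end
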